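/- For all n ≥ 0 and all k with 0 ≤ k ≤ n, the list C(n,k) has exactly binomial(n,k) entries and contains every bit-string of length n having exactly k ones exactly once; in particular C(n,k) has no repeated entries. -/

import Mathlib

/-! Induction along the recursion of `C`. A word of length `n + 1` with `k + 1` ones ends
either in `0`, and then comes from `C n (k + 1)`, or in `1`, and then comes from `C n k`;
the last bit keeps the two halves disjoint, and Pascal's rule adds up their lengths. -/

def C : ℕ → ℕ → List (List Bool)
  | n, 0 => [List.replicate n false]
  | 0, _ + 1 => []
  | n + 1, k + 1 =>
      if n = k then [List.replicate (n + 1) true]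
      else
        ((C n (k + 1)).map fun w => w ++ [false]) ++
          ((C n k).reverse.map fun w => w ++ [true])

theorem List.eq_replicate_iff_count {α : Type*} [BEq α] [LawfulBEq α] {a : α} {n : ℕ}
    {l : List α} : l = replicate n a ↔ l.length = n ∧ l.count a = n := by
  constructor
  · rintro rfl
    simp
  · rintro ⟨rfl, h⟩
    simpa [eq_replicate_iff, count_eq_length, eq_comm] using h

theorem List.eq_replicate_false_iff {n : ℕ} {l : List Bool} :
    l = replicate n false ↔ l.length = n ∧ l.count true = 0 := by
  simp [eq_replicate_iff, count_eq_zero]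

theorem length_C (n k : ℕ) : (C n k).length = n.choose k := by
  fun_induction C n k <;> simp_all [Nat.choose_succ_succ', add_comm]

theorem mem_C {n k : ℕ} {w : List Bool} : w ∈ C n k ↔ w.length = n ∧ w.count true = k := by
  fun_induction C n k generalizing w with
  | case1 n => simpa using List.eq_replicate_false_iff
  | case2 k =>
    simp only [List.not_mem_nil, false_iff, not_and, List.length_eq_zero_iff]
    rintro rfl
    simp
  | case3 n => simpa using List.eq_replicate_iff_count
  | case4 n k _ ih₀ ih₁ =>
    rcases List.eq_nil_or_concat' w with rfl | ⟨v, b, rfl⟩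
    · simp
    · cases b <;> simp [ih₀, ih₁]

theorem nodup_C (n k : ℕ) : (C n k).Nodup := by
  fun_induction C n k with
  | case4 n k _ ih₀ ih₁ =>
    refine (ih₀.map (List.append_left_injective _)).append
      ((List.nodup_reverse.2 ih₁).map (List.append_left_injective _)) ?_
    simp [List.disjoint_left]
  | _ => simp

theorem stmt5_general (n k : ℕ) :
    (C n k).length = n.choose k ∧
    (∀ w : List Bool, w.length = n → w.count true = k → (C n k).count w = 1) ∧
    (C n k).Nodup :=
  ⟨length_C n k,
    fun _ hlen hcount => List.count_eq_one_of_mem (nodup_C n k) (mem_C.2 ⟨hlen, hcount⟩),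
    nodup_C n k⟩

/-- For all `n ≥ 0` and `0 ≤ k ≤ n`, the list `C(n,k)` has exactly `binomial(n,k)`
entries, contains every bit-string of length `n` with exactly `k` ones exactly once,
and has no repeated entries. -/
theorem stmt5 (n k : ℕ) (hk : k ≤ n) :
    (C n k).length = n.choose k ∧
    (∀ w : List Bool, w.length = n → w.count true = k → (C n k).count w = 1) ∧
    (C n k).Nodup :=
  stmt5_general n k
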